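/- Let (A,b) be a reachable pair with A Schur stable, and G(θ) = (I − e^{−iθ}A)^{−1}b. Suppose a positive semidefinite n×n Hermitian matrix Σ admits two decompositions Σ = Σ_{k=1}^r ρ_k G(θ_k)G(θ_k)* = Σ_{k=1}^r ρ'_k G(θ'_k)G(θ'_k)*, where r < n, all ρ_k, ρ'_k > 0, the θ_k are pairwise distinct, and the θ'_k are pairwise distinct. Then the multiset {(θ_k, ρ_k)} equals the multiset {(θ'_k, ρ'_k)}. -/

import Mathlib

open Matrix
open scoped ComplexOrder

noncomputable def Gv {n : ℕ} (A : Matrix (Fin n) (Fin n) ℂ) (b : Fin n → ℂ) (θ : ℝ) :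
    Fin n → ℂ :=
  ((1 : Matrix (Fin n) (Fin n) ℂ) - Complex.exp (-(θ : ℂ) * Complex.I) • A)⁻¹ *ᵥ b

def SchurStable {n : ℕ} (A : Matrix (Fin n) (Fin n) ℂ) : Prop :=
  ∀ z ∈ spectrum ℂ A, ‖z‖ < 1

def Reachable {n : ℕ} (A : Matrix (Fin n) (Fin n) ℂ) (b : Fin n → ℂ) : Prop :=
  Submodule.span ℂ (Set.range fun k : Fin n => (A ^ (k : ℕ)) *ᵥ b) = ⊤

/-!
Reachability makes `q ↦ q(A) b` injective on polynomials of degree `< n`. Clearing the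
denominators of `Σ cₖ (I - zₖ A)⁻¹ b = 0` with `∏ⱼ (I - zⱼ A)` produces such a polynomial
relation, and evaluating at `zₖ⁻¹` kills all but one term. Hence any at most `n` of the
vectors `G(θ)` with distinct `e^{-iθ}` are linearly independent.

Testing both decompositions of `Σ` against `u ⬝ᵥ (Σ *ᵥ star u)` for a functional `u`
vanishing on `span {G(θₖ)}` shows that every `G(θ'ⱼ)` lies in that span; since `r < n`,
independence of `r + 1` vectors forces `θ'ⱼ` to be one of the `θₖ`. Choosing `u` to vanish
on all `G(θₖ)` but one then isolates a single coefficient on each side.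
-/

open Polynomial Set

theorem isUnit_one_sub_smul_of_inv_notMem_spectrum {𝕜 R : Type*} [Field 𝕜] [Ring R]
    [Algebra 𝕜 R] {a : R} {z : 𝕜} (hz : z ≠ 0) (h : z⁻¹ ∉ spectrum 𝕜 a) :
    IsUnit (1 - z • a) := by
  have hu : IsUnit ((Units.mk0 z hz)⁻¹ • (1 : R) - a) := by
    rw [Units.smul_def, ← Algebra.algebraMap_eq_smul_one]
    exact spectrum.notMem_iff.mp h
  rwa [IsUnit.smul_sub_iff_sub_inv_smul, inv_inv] at hu

theorem SchurStable.isUnit_det_one_sub_smul {n : ℕ} {A : Matrix (Fin n) (Fin n) ℂ}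
    (hA : SchurStable A) {z : ℂ} (hz : ‖z‖ = 1) : IsUnit (1 - z • A).det := by
  have hz0 : z ≠ 0 := by rintro rfl; simp at hz
  refine (Matrix.isUnit_iff_isUnit_det _).mp (isUnit_one_sub_smul_of_inv_notMem_spectrum hz0 ?_)
  intro hmem
  simpa [hz] using hA _ hmem

theorem Complex.exp_neg_mul_I_injOn :
    InjOn (fun θ : ℝ => Complex.exp (-(θ : ℂ) * Complex.I)) (Ico 0 (2 * Real.pi)) := by
  intro s hs t ht hst
  refine Circle.exp_injOn_Ico (by linarith) hs ht (Subtype.ext ?_)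
  simpa [Circle.coe_exp, neg_mul, Complex.exp_neg] using hst

theorem Reachable.eq_zero_of_aeval_mulVec_eq_zero {n : ℕ} {A : Matrix (Fin n) (Fin n) ℂ}
    {b : Fin n → ℂ} (hreach : Reachable A b) {q : ℂ[X]} (hq : q.degree < n)
    (h : aeval A q *ᵥ b = 0) : q = 0 := by
  by_contra hq0
  replace hq : q.natDegree < n := (natDegree_lt_iff_degree_lt hq0).mpr hq
  have hind : LinearIndependent ℂ fun i : Fin n => A ^ (i : ℕ) *ᵥ b :=
    linearIndependent_of_top_le_span_of_card_eq_finrank hreach.ge (by simp)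
  have hcoeff : ∀ i : Fin n, q.coeff i = 0 := by
    refine Fintype.linearIndependent_iff.mp hind (fun i => q.coeff i) ?_
    rw [aeval_eq_sum_range' hq, ← Fin.sum_univ_eq_sum_range, Matrix.sum_mulVec] at h
    simpa only [Matrix.smul_mulVec] using h
  refine hq0 (Polynomial.ext fun i => ?_)
  rcases lt_or_ge i n with hi | hi
  · exact hcoeff ⟨i, hi⟩
  · exact coeff_eq_zero_of_natDegree_lt (hq.trans_le hi)

theorem linearIndependent_prod_erase_one_sub_C_mul_X {ι : Type*} [Fintype ι] [DecidableEq ι]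
    {z : ι → ℂ} (hz : Function.Injective z) (hz0 : ∀ k, z k ≠ 0) :
    LinearIndependent ℂ fun k => ∏ j ∈ Finset.univ.erase k, (1 - C (z j) * X) := by
  rw [Fintype.linearIndependent_iff]
  intro c hc l
  have hvanish : ∀ k ≠ l, eval (z l)⁻¹ (∏ j ∈ Finset.univ.erase k, (1 - C (z j) * X)) = 0 := by
    intro k hk
    rw [eval_prod]
    refine Finset.prod_eq_zero (Finset.mem_erase.mpr ⟨hk.symm, Finset.mem_univ l⟩) ?_
    simp [mul_inv_cancel₀ (hz0 l)]
  have hne : eval (z l)⁻¹ (∏ j ∈ Finset.univ.erase l, (1 - C (z j) * X)) ≠ 0 := by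
    rw [eval_prod, Finset.prod_ne_zero_iff]
    intro j hj
    have hjl : z j ≠ z l := hz.ne (Finset.ne_of_mem_erase hj)
    simpa [sub_eq_zero, eq_comm (a := (1 : ℂ)), mul_inv_eq_one₀ (hz0 l)] using hjl
  have := congrArg (eval (z l)⁻¹) hc
  rw [eval_finsetSum, Finset.sum_eq_single l (fun k _ hk => by simp [hvanish k hk])
    (by simp)] at this
  simpa [hne] using this

theorem Reachable.linearIndependent_inv_one_sub_smul_mulVec {n : ℕ}
    {A : Matrix (Fin n) (Fin n) ℂ} {b : Fin n → ℂ} (hreach : Reachable A b) {ι : Type*}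
    [Fintype ι] (hcard : Fintype.card ι ≤ n) {z : ι → ℂ} (hz : Function.Injective z)
    (hz0 : ∀ k, z k ≠ 0) (hu : ∀ k, IsUnit (1 - z k • A).det) :
    LinearIndependent ℂ fun k => (1 - z k • A)⁻¹ *ᵥ b := by
  classical
  set Q : ι → ℂ[X] := fun k => ∏ j ∈ Finset.univ.erase k, (1 - C (z j) * X)
  have haeval : ∀ k, aeval A (1 - C (z k) * X) = 1 - z k • A := fun k => by
    simp [Algebra.algebraMap_eq_smul_one]
  have hclear : ∀ k, aeval A (Q k) *ᵥ b
      = aeval A (∏ j, (1 - C (z j) * X)) *ᵥ ((1 - z k • A)⁻¹ *ᵥ b) := fun k => by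
    rw [← Finset.prod_erase_mul _ _ (Finset.mem_univ k), map_mul, haeval, mulVec_mulVec,
      Matrix.mul_assoc, mul_nonsing_inv _ (hu k), Matrix.mul_one]
  have hdeg : ∀ k, Q k ∈ degreeLT ℂ n := fun k => by
    have hpos : 0 < Fintype.card ι := Fintype.card_pos_iff.mpr ⟨k⟩
    have hlin : ∀ j, (1 - C (z j) * X).natDegree ≤ 1 := fun j => by compute_degree
    have hlt : (Q k).natDegree < n := calc
      (Q k).natDegree ≤ ∑ j ∈ Finset.univ.erase k, (1 - C (z j) * X).natDegree :=
        natDegree_prod_le _ _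
      _ ≤ ∑ j ∈ Finset.univ.erase k, 1 := by gcongr with j; exact hlin j
      _ < n := by simp [Finset.card_erase_of_mem]; omega
    exact mem_degreeLT.mpr (degree_le_natDegree.trans_lt (by exact_mod_cast hlt))
  rw [Fintype.linearIndependent_iff]
  intro c hc
  suffices hQ : ∑ k, c k • Q k = 0 from
    Fintype.linearIndependent_iff.mp (linearIndependent_prod_erase_one_sub_C_mul_X hz hz0) c hQ
  refine hreach.eq_zero_of_aeval_mulVec_eq_zero
    (mem_degreeLT.mp (Submodule.sum_mem _ fun k _ => Submodule.smul_mem _ _ (hdeg k))) ?_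
  simp only [map_sum, map_smul, Matrix.sum_mulVec, Matrix.smul_mulVec, hclear]
  rw [Finset.sum_congr rfl fun k _ => (Matrix.mulVec_smul _ (c k) _).symm, ← Matrix.mulVec_sum, hc,
    Matrix.mulVec_zero]

theorem linearIndependent_Gv {n : ℕ} {A : Matrix (Fin n) (Fin n) ℂ} {b : Fin n → ℂ}
    (hA : SchurStable A) (hreach : Reachable A b) {ι : Type*} [Fintype ι]
    (hcard : Fintype.card ι ≤ n) {θ : ι → ℝ} (hθ : Function.Injective θ)
    (hθmem : ∀ k, θ k ∈ Ico 0 (2 * Real.pi)) :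
    LinearIndependent ℂ fun k => Gv A b (θ k) :=
  hreach.linearIndependent_inv_one_sub_smul_mulVec hcard
    (fun _ _ h => hθ (Complex.exp_neg_mul_I_injOn (hθmem _) (hθmem _) h))
    (fun _ => Complex.exp_ne_zero _)
    (fun _ => hA.isUnit_det_one_sub_smul (by simp [Complex.norm_exp]))

theorem exists_eq_of_Gv_mem_span {n r : ℕ} {A : Matrix (Fin n) (Fin n) ℂ} {b : Fin n → ℂ}
    (hA : SchurStable A) (hreach : Reachable A b) (hr : r < n) {θ : Fin r → ℝ}
    (hθ : Function.Injective θ) (hθmem : ∀ k, θ k ∈ Ico 0 (2 * Real.pi)) {t : ℝ}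
    (ht : t ∈ Ico 0 (2 * Real.pi)) (hspan : Gv A b t ∈ Submodule.span ℂ (range (Gv A b ∘ θ))) :
    ∃ k, t = θ k := by
  by_contra! hne
  have hind := linearIndependent_Gv hA hreach (by simp [hr])
    (Fin.snoc_injective_of_injective hθ (by rintro ⟨k, hk⟩; exact hne k hk.symm))
    (Fin.lastCases (by simpa using ht) (by simpa using hθmem))
  rw [← Function.comp_def, Fin.comp_snoc, linearIndependent_finSnoc] at hind
  exact hind.2 hspan

theorem Submodule.exists_dotProduct_ne_zero_of_notMem {K n : Type*} [Field K] [Fintype n]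
    {p : Submodule K (n → K)} {x : n → K} (hx : x ∉ p) :
    ∃ u : n → K, (∀ y ∈ p, u ⬝ᵥ y = 0) ∧ u ⬝ᵥ x ≠ 0 := by
  classical
  obtain ⟨f, hfx, hfp⟩ := p.exists_dual_map_eq_bot_of_notMem hx inferInstance
  have hf : ∀ y, (dotProductEquiv K n).symm f ⬝ᵥ y = f y := fun y =>
    LinearMap.congr_fun ((dotProductEquiv K n).apply_symm_apply f) y
  refine ⟨(dotProductEquiv K n).symm f, fun y hy => ?_, by rwa [hf]⟩
  rw [hf, ← Submodule.mem_bot K, ← hfp]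
  exact Submodule.mem_map_of_mem hy

theorem dotProduct_sum_smul_vecMulVec_mulVec_star {ι n : Type*} [Fintype ι] [Fintype n]
    (v : ι → n → ℂ) (c : ι → ℝ) (u : n → ℂ) :
    u ⬝ᵥ ((∑ k, (c k : ℂ) • vecMulVec (v k) (star (v k))) *ᵥ star u)
      = ((∑ k, c k * Complex.normSq (u ⬝ᵥ v k) : ℝ) : ℂ) := by
  push_cast
  simp only [Matrix.sum_mulVec, dotProduct_sum, Matrix.smul_mulVec, vecMulVec_mulVec,
    star_dotProduct_star, dotProduct_smul]
  refine Finset.sum_congr rfl fun k _ => ?_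
  rw [← Complex.mul_conj]
  simp

section Decompositions

variable {ι ι' n : Type*} [Fintype ι] [Fintype ι'] [Fintype n]

theorem mem_span_range_of_sum_smul_vecMulVec_eq (v : ι → n → ℂ) (c : ι → ℝ) (v' : ι' → n → ℂ)
    {c' : ι' → ℝ} (hc' : ∀ j, 0 < c' j)
    (h : ∑ k, (c k : ℂ) • vecMulVec (v k) (star (v k))
      = ∑ j, (c' j : ℂ) • vecMulVec (v' j) (star (v' j))) (j : ι') :
    v' j ∈ Submodule.span ℂ (range v) := by
  by_contra hj
  obtain ⟨u, hu0, hu⟩ := Submodule.exists_dotProduct_ne_zero_of_notMem hj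
  have hsum := congrArg (fun M => u ⬝ᵥ (M *ᵥ star u)) h
  simp only [dotProduct_sum_smul_vecMulVec_mulVec_star, Complex.ofReal_inj,
    hu0 _ (Submodule.subset_span (mem_range_self _)), map_zero, mul_zero,
    Finset.sum_const_zero] at hsum
  have hterm := (Finset.sum_eq_zero_iff_of_nonneg fun k _ =>
    mul_nonneg (hc' k).le (Complex.normSq_nonneg _)).mp hsum.symm j (Finset.mem_univ j)
  exact (mul_pos (hc' j) (Complex.normSq_pos.mpr hu)).ne' hterm

theorem eq_of_sum_smul_vecMulVec_eq_comp {v : ι → n → ℂ} (hv : LinearIndependent ℂ v)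
    {σ : ι' → ι} (hσ : Function.Injective σ) (c : ι → ℝ) (c' : ι' → ℝ)
    (h : ∑ k, (c k : ℂ) • vecMulVec (v k) (star (v k))
      = ∑ j, (c' j : ℂ) • vecMulVec (v (σ j)) (star (v (σ j)))) (j : ι') :
    c' j = c (σ j) := by
  classical
  obtain ⟨u, hu0, hu⟩ := Submodule.exists_dotProduct_ne_zero_of_notMem
    (hv.notMem_span_image (s := {σ j}ᶜ) (x := σ j) (by simp))
  have hvanish : ∀ k ≠ σ j, u ⬝ᵥ v k = 0 := fun k hk =>
    hu0 _ (Submodule.subset_span ⟨k, hk, rfl⟩)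
  have hsum := congrArg (fun M => u ⬝ᵥ (M *ᵥ star u)) h
  simp only [dotProduct_sum_smul_vecMulVec_mulVec_star, Complex.ofReal_inj] at hsum
  rw [Finset.sum_eq_single (σ j) (fun k _ hk => by simp [hvanish k hk]) (by simp),
    Finset.sum_eq_single j (fun k _ hk => by simp [hvanish _ (hσ.ne hk)]) (by simp)] at hsum
  exact (mul_right_cancel₀ (Complex.normSq_pos.mpr hu).ne' hsum).symm

end Decompositions

theorem Multiset.map_univ_eq_of_forall_exists_eq {ι α : Type*} [Fintype ι] {f g : ι → α}
    (hg : Function.Injective g) (h : ∀ j, ∃ k, g j = f k) :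
    Finset.univ.val.map f = Finset.univ.val.map g := by
  refine (Multiset.eq_of_le_of_card_le ?_ (by simp)).symm
  rw [Multiset.le_iff_subset (Finset.univ.nodup.map hg)]
  intro x hx
  obtain ⟨j, -, rfl⟩ := Multiset.mem_map.mp hx
  obtain ⟨k, hk⟩ := h j
  exact hk ▸ Multiset.mem_map_of_mem f (Finset.mem_univ k)

theorem stmt1_general {n r : ℕ} (A : Matrix (Fin n) (Fin n) ℂ) (b : Fin n → ℂ)
    (hA : SchurStable A) (hreach : Reachable A b) (hr : r < n)
    (Sig : Matrix (Fin n) (Fin n) ℂ)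
    (θ θ' : Fin r → ℝ) (ρ ρ' : Fin r → ℝ)
    (hθmem : ∀ k, θ k ∈ Set.Ico (0 : ℝ) (2 * Real.pi))
    (hθ'mem : ∀ k, θ' k ∈ Set.Ico (0 : ℝ) (2 * Real.pi))
    (hρ' : ∀ k, 0 < ρ' k)
    (hθ : Function.Injective θ) (hθ' : Function.Injective θ')
    (hdec : Sig = ∑ k, (ρ k : ℂ) • vecMulVec (Gv A b (θ k)) (star (Gv A b (θ k))))
    (hdec' : Sig = ∑ k, (ρ' k : ℂ) • vecMulVec (Gv A b (θ' k)) (star (Gv A b (θ' k)))) :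
    Multiset.map (fun k => (θ k, ρ k)) Finset.univ.val
      = Multiset.map (fun k => (θ' k, ρ' k)) Finset.univ.val := by
  have hdecs := hdec.symm.trans hdec'
  have hfreq : ∀ j, ∃ k, θ' j = θ k := fun j =>
    exists_eq_of_Gv_mem_span hA hreach hr hθ hθmem (hθ'mem j)
      (mem_span_range_of_sum_smul_vecMulVec_eq _ ρ _ hρ' hdecs j)
  choose σ hσ using hfreq
  have hσinj : Function.Injective σ := fun j k h => hθ' (by rw [hσ j, hσ k, h])
  simp only [hσ] at hdecs
  have hcoeff := eq_of_sum_smul_vecMulVec_eq_comp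
    (linearIndependent_Gv hA hreach (by simpa using hr.le) hθ hθmem) hσinj ρ ρ' hdecs
  exact Multiset.map_univ_eq_of_forall_exists_eq (fun j k h => hθ' (congrArg Prod.fst h))
    fun j => ⟨σ j, by rw [hσ j, hcoeff j]⟩

theorem stmt1 {n r : ℕ} (A : Matrix (Fin n) (Fin n) ℂ) (b : Fin n → ℂ)
    (hA : SchurStable A) (hreach : Reachable A b) (hr : r < n)
    (Sig : Matrix (Fin n) (Fin n) ℂ) (hSig : Sig.PosSemidef)
    (θ θ' : Fin r → ℝ) (ρ ρ' : Fin r → ℝ)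
    (hθmem : ∀ k, θ k ∈ Set.Ico (0 : ℝ) (2 * Real.pi))
    (hθ'mem : ∀ k, θ' k ∈ Set.Ico (0 : ℝ) (2 * Real.pi))
    (hρ : ∀ k, 0 < ρ k) (hρ' : ∀ k, 0 < ρ' k)
    (hθ : Function.Injective θ) (hθ' : Function.Injective θ')
    (hdec : Sig = ∑ k, (ρ k : ℂ) • vecMulVec (Gv A b (θ k)) (star (Gv A b (θ k))))
    (hdec' : Sig = ∑ k, (ρ' k : ℂ) • vecMulVec (Gv A b (θ' k)) (star (Gv A b (θ' k)))) :
    Multiset.map (fun k => (θ k, ρ k)) Finset.univ.val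
      = Multiset.map (fun k => (θ' k, ρ' k)) Finset.univ.val :=
  stmt1_general A b hA hreach hr Sig θ θ' ρ ρ' hθmem hθ'mem hρ' hθ hθ' hdec hdec'
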